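/- Consistency of the divide-and-conquer K-combination generator: for every K : ℕ, all lists xs ys : List α, and every k ≤ K, the k-th entry of convol (kcombs K xs) (kcombs K ys) is a permutation of the k-th entry of kcombs K (xs ++ ys); in particular the result of the divide-and-conquer recursion is, entrywise up to permutation, independent of how the input list is split. -/

import Mathlib

variable {α : Type*}

/-- Cross-join: concatenate each element of `xss` with each element of `yss`. -/
def cross (xss yss : List (List α)) : List (List α) :=
  xss.flatMap (fun x => yss.map (fun y => x ++ y))

/-- Discrete convolution of two lists of blocks under `cross`: the k-th entry is
the concatenation over j = 0,…,k of `cross (xss[k-j]) (yss[j])`. -/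
def convol (xss yss : List (List (List α))) : List (List (List α)) :=
  (List.range xss.length).map (fun k =>
    (List.range (k + 1)).flatMap (fun j => cross (xss.getD (k - j) []) (yss.getD j [])))

/-- One sequential step of the K-combination generator (for `css` of length K+1). -/
def forStep (x : α) (css : List (List (List α))) : List (List (List α)) :=
  [[[]]] ++ (List.range (css.length - 1)).map
    (fun i => (css.getD i []).map (x :: ·) ++ css.getD (i + 1) [])

/-- Sequential K-combination generator. -/
def kcombs (K : ℕ) : List α → List (List (List α))
  | [] => [[[]]] ++ List.replicate K []
  | x :: xs => forStep x (kcombs K xs)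

section Aux

variable {β γ : Type*}

lemma flatMap_congr' {l : List β} {f g : β → List γ} (h : ∀ a ∈ l, f a = g a) :
    l.flatMap f = l.flatMap g := by
  induction l with
  | nil => rfl
  | cons a l ih =>
    simp only [List.flatMap_cons, h a (by simp), ih fun b hb => h b (by simp [hb])]

lemma flatMap_perm_congr {l : List β} {f g : β → List γ} (h : ∀ a ∈ l, (f a).Perm (g a)) :
    (l.flatMap f).Perm (l.flatMap g) := by
  induction l with
  | nil => exact List.Perm.refl _
  | cons a l ih =>
    simp only [List.flatMap_cons]
    exact (h a (by simp)).append (ih fun b hb => h b (by simp [hb]))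

lemma flatMap_append_perm (l : List β) (f g : β → List γ) :
    (l.flatMap fun a => f a ++ g a).Perm (l.flatMap f ++ l.flatMap g) := by
  induction l with
  | nil => simp
  | cons a l ih =>
    simp only [List.flatMap_cons]
    refine (ih.append_left _).trans ?_
    have h := ((List.perm_append_comm (l₁ := g a) (l₂ := l.flatMap f)).append_left
      (f a)).append_right (l.flatMap g)
    simpa [List.append_assoc] using h

lemma cross_nil_left (C : List (List α)) : cross ([] : List (List α)) C = [] := rfl

lemma cross_single_nil (C : List (List α)) : cross [([] : List α)] C = C := by
  simp [cross]

lemma cross_append_left (A B C : List (List α)) :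
    cross (A ++ B) C = cross A C ++ cross B C :=
  List.flatMap_append

lemma cross_map_cons (x : α) (B C : List (List α)) :
    cross (B.map (x :: ·)) C = (cross B C).map (x :: ·) := by
  simp only [cross, List.flatMap_map, List.map_flatMap, List.map_map]
  rfl

lemma cross_perm {A A' C C' : List (List α)} (h1 : A.Perm A') (h2 : C.Perm C') :
    (cross A C).Perm (cross A' C') :=
  (List.Perm.flatMap_right _ h1).trans (flatMap_perm_congr fun _ _ => h2.map _)

lemma getD_map_range {n : ℕ} (f : ℕ → β) (d : β) {i : ℕ} (h : i < n) :
    (((List.range n).map f).getD i d) = f i := by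
  rw [List.getD_eq_getElem _ _ (by simpa using h)]
  simp

lemma kcombs_length (K : ℕ) (xs : List α) : (kcombs K xs).length = K + 1 := by
  induction xs with
  | nil => simp [kcombs]
  | cons x xs ih => simp [kcombs, forStep, ih]

lemma kcombs_getD_perm (K : ℕ) (xs : List α) :
    ∀ k ≤ K, ((kcombs K xs).getD k []).Perm (List.sublistsLen k xs) := by
  induction xs with
  | nil =>
    intro k _
    match k with
    | 0 => simp [kcombs]
    | k + 1 =>
      have h : ((kcombs K ([] : List α)).getD (k + 1) []) = [] := by
        simp only [kcombs, List.singleton_append, List.getD_eq_getElem?_getD,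
          List.getElem?_cons_succ, List.getElem?_replicate]
        split <;> simp
      rw [h, List.sublistsLen_succ_nil]
  | cons x xs ih =>
    intro k hk
    match k with
    | 0 => simp [kcombs, forStep, List.sublistsLen_zero]
    | k + 1 =>
      have hlen : (kcombs K xs).length = K + 1 := kcombs_length K xs
      have hgd : (kcombs K (x :: xs)).getD (k + 1) [] =
          ((kcombs K xs).getD k []).map (x :: ·) ++ (kcombs K xs).getD (k + 1) [] := by
        show (forStep x (kcombs K xs)).getD (k + 1) [] = _
        rw [forStep, hlen]
        simp only [Nat.add_sub_cancel, List.singleton_append, List.getD_cons_succ]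
        exact getD_map_range _ _ (by omega)
      rw [hgd, List.sublistsLen_succ_cons]
      exact (((ih k (by omega)).map _).append (ih (k + 1) hk)).trans List.perm_append_comm

lemma key_perm (ys : List α) : ∀ (xs : List α) (k : ℕ),
    ((List.range (k + 1)).flatMap fun j =>
        cross (List.sublistsLen (k - j) xs) (List.sublistsLen j ys)).Perm
      (List.sublistsLen k (xs ++ ys)) := by
  intro xs
  induction xs with
  | nil =>
    intro k
    rw [List.range_succ, List.flatMap_append]
    have h1 : ((List.range k).flatMap fun j =>
        cross (List.sublistsLen (k - j) ([] : List α)) (List.sublistsLen j ys)) = [] := by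
      rw [flatMap_congr' (g := fun _ => ([] : List (List α)))]
      · simp
      · intro j hj
        have hj' : j < k := List.mem_range.mp hj
        have h2 : k - j = (k - j - 1) + 1 := by omega
        rw [h2, List.sublistsLen_succ_nil, cross_nil_left]
    rw [h1, List.nil_append, List.nil_append]
    simp only [List.flatMap_cons, List.flatMap_nil, List.append_nil, Nat.sub_self,
      List.sublistsLen_zero, cross_single_nil]
    exact List.Perm.refl _
  | cons x xs ih =>
    intro k
    match k with
    | 0 =>
      have h0 : List.range 1 = [0] := rfl
      rw [h0]
      simp only [List.flatMap_cons, List.flatMap_nil, List.append_nil, Nat.sub_zero,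
        List.sublistsLen_zero, cross_single_nil]
      exact List.Perm.refl _
    | m + 1 =>
      rw [List.range_succ, List.flatMap_append]
      have hF : ∀ j ∈ List.range (m + 1),
          cross (List.sublistsLen (m + 1 - j) (x :: xs)) (List.sublistsLen j ys) =
          cross (List.sublistsLen (m + 1 - j) xs) (List.sublistsLen j ys) ++
            (cross (List.sublistsLen (m - j) xs) (List.sublistsLen j ys)).map (x :: ·) := by
        intro j hj
        have hj' : j < m + 1 := List.mem_range.mp hj
        have h2 : m + 1 - j = (m - j) + 1 := by omega
        rw [h2, List.sublistsLen_succ_cons, cross_append_left, cross_map_cons, ← h2]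
      rw [flatMap_congr' hF]
      set A := (List.range (m + 1)).flatMap fun j =>
        cross (List.sublistsLen (m + 1 - j) xs) (List.sublistsLen j ys) with hA
      set B := (List.range (m + 1)).flatMap fun j =>
        (cross (List.sublistsLen (m - j) xs) (List.sublistsLen j ys)).map (x :: ·) with hB
      have hlast : (([m + 1].flatMap fun j =>
          cross (List.sublistsLen (m + 1 - j) (x :: xs)) (List.sublistsLen j ys))) =
          List.sublistsLen (m + 1) ys := by
        simp [Nat.sub_self, List.sublistsLen_zero, cross_single_nil]
      rw [hlast]
      set C := List.sublistsLen (m + 1) ys with hC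
      have hAB : ((List.range (m + 1)).flatMap fun j =>
          cross (List.sublistsLen (m + 1 - j) xs) (List.sublistsLen j ys) ++
            (cross (List.sublistsLen (m - j) xs) (List.sublistsLen j ys)).map (x :: ·)).Perm
          (A ++ B) := flatMap_append_perm _ _ _
      have hAC : (A ++ C).Perm (List.sublistsLen (m + 1) (xs ++ ys)) := by
        have h3 : A ++ C = (List.range (m + 2)).flatMap fun j =>
            cross (List.sublistsLen (m + 1 - j) xs) (List.sublistsLen j ys) := by
          rw [show m + 2 = (m + 1) + 1 from rfl, List.range_succ, List.flatMap_append, hA]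
          congr 1
          simp [Nat.sub_self, List.sublistsLen_zero, cross_single_nil, hC]
        rw [h3]
        exact ih (m + 1)
      have hBQ : B.Perm ((List.sublistsLen m (xs ++ ys)).map (x :: ·)) := by
        have h4 : B = ((List.range (m + 1)).flatMap fun j =>
            cross (List.sublistsLen (m - j) xs) (List.sublistsLen j ys)).map (x :: ·) := by
          rw [hB, List.map_flatMap]
        rw [h4]
        exact (ih m).map _
      have hshuf : ((A ++ B) ++ C).Perm ((A ++ C) ++ B) := by
        have h := ((List.perm_append_comm (l₁ := B) (l₂ := C)).append_left A)
        simpa [List.append_assoc] using h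
      rw [show x :: xs ++ ys = x :: (xs ++ ys) from rfl, List.sublistsLen_succ_cons]
      exact (hAB.append_right C).trans (hshuf.trans (hAC.append hBQ))

end Aux

/-- Consistency of the divide-and-conquer K-combination generator. -/
theorem convol_kcombs_perm (K : ℕ) (xs ys : List α) :
    ∀ k ≤ K,
      ((convol (kcombs K xs) (kcombs K ys)).getD k []).Perm
        ((kcombs K (xs ++ ys)).getD k []) := by
  intro k hk
  have hgd : (convol (kcombs K xs) (kcombs K ys)).getD k [] =
      (List.range (k + 1)).flatMap fun j =>
        cross ((kcombs K xs).getD (k - j) []) ((kcombs K ys).getD j []) := by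
    rw [convol, kcombs_length]
    exact getD_map_range _ _ (by omega)
  rw [hgd]
  have h1 : ((List.range (k + 1)).flatMap fun j =>
      cross ((kcombs K xs).getD (k - j) []) ((kcombs K ys).getD j [])).Perm
      ((List.range (k + 1)).flatMap fun j =>
        cross (List.sublistsLen (k - j) xs) (List.sublistsLen j ys)) := by
    apply flatMap_perm_congr
    intro j hj
    have hj' : j < k + 1 := List.mem_range.mp hj
    exact cross_perm (kcombs_getD_perm K xs (k - j) (by omega))
      (kcombs_getD_perm K ys j (by omega))
  exact (h1.trans (key_perm ys xs k)).trans (kcombs_getD_perm K (xs ++ ys) k hk).symm
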